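/- Monotonicity of elastification: if A and A' are deterministic partial Moore machines over Π with letter b and outputs in a join-semilattice, and A is pointwise dominated by A' (on every word where A has a run, A' has a run with output at least A's), then the elastification A_el is pointwise dominated by A'_el. -/

import Mathlib

/-- A deterministic Moore machine with a partial transition function over alphabet `A`
and outputs in `F`. -/
structure PMoore (A F : Type) where
  Q : Type
  [dec : DecidableEq Q]
  [fin : Fintype Q]
  init : Q
  step : Q → A → Option Q
  out : Q → F

attribute [instance] PMoore.dec PMoore.fin

/-- The (partial) run of the machine from a state on a word. -/
def PMoore.runFrom {A F : Type} (M : PMoore A F) : M.Q → List A → Option M.Q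
  | q, [] => some q
  | q, a :: w => (M.step q a).bind fun q' => M.runFrom q' w

/-- The (partial) output of the machine on a word. -/
def PMoore.output {A F : Type} (M : PMoore A F) (w : List A) : Option F :=
  (M.runFrom M.init w).map M.out

/-- Elastic: every defined `b`-transition is a self-loop. -/
def PMoore.Elastic {A F : Type} (M : PMoore A F) (b : A) : Prop :=
  ∀ q q', M.step q b = some q' → q' = q

/-- `R_b(S)`: the set of states reachable from `S` by a (possibly empty) sequence of
`b`-transitions. -/
noncomputable def PMoore.Rb {A F : Type} (M : PMoore A F) (b : A) (S : Finset M.Q) :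
    Finset M.Q := by
  classical
  exact Finset.univ.filter fun q' =>
    ∃ q ∈ S, Relation.ReflTransGen (fun x y => M.step x b = some y) q q'

/-- The transition function of the elastification: the `b`-closure subset construction.
On `a ≠ b` a set `S` goes to `R_b(δ(S,a))` (undefined if `δ(S,a)` is empty); on `b`
the set `S` maps to itself provided some state of `S` has a `b`-transition. -/
noncomputable def PMoore.elStep {A F : Type} [DecidableEq A] (M : PMoore A F) (b : A)
    (S : Finset M.Q) (a : A) : Option (Finset M.Q) := by
  classical
  exact if a = b then
    if ∃ q ∈ S, (M.step q b).isSome then some S else none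
  else
    let T : Finset M.Q := Finset.univ.filter fun q' => ∃ q ∈ S, M.step q a = some q'
    if T.Nonempty then some (M.Rb b T) else none

/-- The run of the elastification from a set-state. -/
noncomputable def PMoore.elRunFrom {A F : Type} [DecidableEq A] (M : PMoore A F) (b : A) :
    Finset M.Q → List A → Option (Finset M.Q)
  | S, [] => some S
  | S, a :: w => (M.elStep b S a).bind fun S' => M.elRunFrom b S' w

/-- The run of the elastification on a word, starting from the initial set `R_b({q₀})`. -/
noncomputable def PMoore.elRun {A F : Type} [DecidableEq A] (M : PMoore A F) (b : A)
    (w : List A) : Option (Finset M.Q) :=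
  M.elRunFrom b (M.Rb b {M.init}) w

/-- The output of a set-state of the elastification: the join of the outputs of its
elements (junk value on the empty set). -/
noncomputable def PMoore.joinOut {A F : Type} [SemilatticeSup F] (M : PMoore A F)
    (S : Finset M.Q) : F :=
  if h : S.Nonempty then S.sup' h M.out else M.out M.init

/-- The (partial) output of the elastification on a word. -/
noncomputable def PMoore.elOutput {A F : Type} [DecidableEq A] [SemilatticeSup F]
    (M : PMoore A F) (b : A) (w : List A) : Option F :=
  (M.elRun b w).map M.joinOut

/-!
Run the two elastifications in lockstep and maintain the invariant that every state in the
current set-state of `A_el` is reached in `A` by some word on which `A'` ends inside the current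
set-state of `A'_el`. Each elastic step only appends letters to such witness words, and
domination guarantees that `A'` can follow; at the end, domination on the witness words
compares the joins.
-/

namespace PMoore

variable {A F : Type}

section Runs

variable (M : PMoore A F)

theorem runFrom_cons_eq_some {q p : M.Q} {a : A} {w : List A} :
    M.runFrom q (a :: w) = some p ↔ ∃ r, M.step q a = some r ∧ M.runFrom r w = some p := by
  simp [runFrom, Option.bind_eq_some_iff]

theorem runFrom_append (q : M.Q) (u v : List A) :
    M.runFrom q (u ++ v) = (M.runFrom q u).bind fun q' => M.runFrom q' v := by
  induction u generalizing q with
  | nil => rfl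
  | cons a u ih =>
    simp only [List.cons_append, runFrom, ih]
    cases M.step q a <;> simp

theorem reflTransGen_iff_runFrom_replicate (b : A) {q p : M.Q} :
    Relation.ReflTransGen (fun x y => M.step x b = some y) q p ↔
      ∃ k, M.runFrom q (List.replicate k b) = some p := by
  constructor
  · intro h
    induction h using Relation.ReflTransGen.head_induction_on with
    | refl => exact ⟨0, rfl⟩
    | head hstep _ ih =>
      obtain ⟨k, hk⟩ := ih
      exact ⟨k + 1, M.runFrom_cons_eq_some.2 ⟨_, hstep, hk⟩⟩
  · rintro ⟨k, hk⟩
    induction k generalizing q with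
    | zero => cases hk; rfl
    | succ k ih =>
      obtain ⟨r, hstep, hr⟩ := M.runFrom_cons_eq_some.1 hk
      exact .head hstep (ih hr)

end Runs

section Elastification

variable (M : PMoore A F) (b : A)

/-- The paper's `δ(S, a)`. -/
noncomputable def post (S : Finset M.Q) (a : A) : Finset M.Q := by
  classical
  exact Finset.univ.filter fun q' => ∃ q ∈ S, M.step q a = some q'

theorem mem_post {S : Finset M.Q} {a : A} {p : M.Q} :
    p ∈ M.post S a ↔ ∃ q ∈ S, M.step q a = some p := by
  simp [post]

theorem mem_Rb {S : Finset M.Q} {p : M.Q} :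
    p ∈ M.Rb b S ↔ ∃ q ∈ S, ∃ k, M.runFrom q (List.replicate k b) = some p := by
  simp [Rb, reflTransGen_iff_runFrom_replicate]

theorem subset_Rb (S : Finset M.Q) : S ⊆ M.Rb b S :=
  fun q hq => (M.mem_Rb b).2 ⟨q, hq, 0, rfl⟩

theorem mem_Rb_post {S : Finset M.Q} {a : A} {p : M.Q} :
    p ∈ M.Rb b (M.post S a) ↔ ∃ q ∈ S, ∃ k, M.runFrom q (a :: List.replicate k b) = some p := by
  simp only [mem_Rb, mem_post, runFrom_cons_eq_some]
  grind

variable [DecidableEq A]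

theorem elStep_self (S : Finset M.Q) :
    M.elStep b S b = if ∃ q ∈ S, ∃ r, M.step q b = some r then some S else none := by
  simp [elStep, Option.isSome_iff_exists]

theorem elStep_of_ne {a : A} (hab : a ≠ b) (S : Finset M.Q) :
    M.elStep b S a = if (M.post S a).Nonempty then some (M.Rb b (M.post S a)) else none := by
  simp only [elStep, hab, if_false]
  rfl

theorem nonempty_of_elStep_eq_some {S T : Finset M.Q} {a : A} (h : M.elStep b S a = some T) :
    T.Nonempty := by
  by_cases hab : a = b
  · subst hab
    rw [elStep_self] at h
    split_ifs at h with hS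
    obtain ⟨q, hq, -⟩ := hS
    exact Option.some_injective _ h ▸ ⟨q, hq⟩
  · rw [elStep_of_ne M b hab] at h
    split_ifs at h with hS
    exact Option.some_injective _ h ▸ hS.mono (M.subset_Rb b _)

theorem nonempty_of_elRunFrom_eq_some {S T : Finset M.Q} {w : List A} (hS : S.Nonempty)
    (h : M.elRunFrom b S w = some T) : T.Nonempty := by
  induction w generalizing S with
  | nil => exact Option.some_injective _ h ▸ hS
  | cons a w ih =>
    obtain ⟨S₁, h₁, hw⟩ := Option.bind_eq_some_iff.1 h
    exact ih (M.nonempty_of_elStep_eq_some b h₁) hw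

end Elastification

def Tracks (M M' : PMoore A F) (S : Finset M.Q) (S' : Finset M'.Q) : Prop :=
  ∀ q ∈ S, ∃ u, M.runFrom M.init u = some q ∧ ∃ q' ∈ S', M'.runFrom M'.init u = some q'

section Simulation

variable {M M' : PMoore A F} (b : A)
  (hrun : ∀ u q, M.runFrom M.init u = some q → ∃ q', M'.runFrom M'.init u = some q')
include hrun

theorem Tracks.extend {S : Finset M.Q} {S' : Finset M'.Q} (h : Tracks M M' S S') {q p : M.Q}
    {v : List A} (hq : q ∈ S) (hv : M.runFrom q v = some p) :
    ∃ u, M.runFrom M.init (u ++ v) = some p ∧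
      ∃ q' ∈ S', ∃ p', M'.runFrom q' v = some p' ∧ M'.runFrom M'.init (u ++ v) = some p' := by
  obtain ⟨u, hu, q', hq', hu'⟩ := h q hq
  have huv : M.runFrom M.init (u ++ v) = some p := by simp [runFrom_append, hu, hv]
  obtain ⟨p', hp'⟩ := hrun _ _ huv
  refine ⟨u, huv, q', hq', p', ?_, hp'⟩
  simpa [runFrom_append, hu'] using hp'

theorem tracks_Rb_init : Tracks M M' (M.Rb b {M.init}) (M'.Rb b {M'.init}) := by
  intro q hq
  obtain ⟨k, hk⟩ : ∃ k, M.runFrom M.init (List.replicate k b) = some q := by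
    simpa using (M.mem_Rb b).1 hq
  obtain ⟨q', hq'⟩ := hrun _ _ hk
  exact ⟨_, hk, q', (M'.mem_Rb b).2 ⟨_, Finset.mem_singleton_self _, k, hq'⟩, hq'⟩

variable [DecidableEq A]

theorem Tracks.elStep {S T : Finset M.Q} {S' : Finset M'.Q} (h : Tracks M M' S S') {a : A}
    (hT : M.elStep b S a = some T) :
    ∃ T', M'.elStep b S' a = some T' ∧ Tracks M M' T T' := by
  by_cases hab : a = b
  · subst hab
    rw [elStep_self] at hT
    split_ifs at hT with hS
    cases hT
    obtain ⟨q, hq, r, hr⟩ := hS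
    obtain ⟨-, -, q', hq', r', hr', -⟩ :=
      h.extend hrun hq (v := [a]) (M.runFrom_cons_eq_some.2 ⟨r, hr, rfl⟩)
    obtain ⟨r'', hr'', -⟩ := M'.runFrom_cons_eq_some.1 hr'
    exact ⟨S', by rw [elStep_self, if_pos ⟨q', hq', r'', hr''⟩], h⟩
  · rw [elStep_of_ne M b hab] at hT
    split_ifs at hT with hS
    cases hT
    have hfollow : ∀ p ∈ M.Rb b (M.post S a), ∃ u, M.runFrom M.init u = some p ∧
        ∃ p' ∈ M'.Rb b (M'.post S' a), M'.runFrom M'.init u = some p' := by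
      intro p hp
      obtain ⟨q, hq, k, hk⟩ := (M.mem_Rb_post b).1 hp
      obtain ⟨u, hu, q', hq', p', hp', hu'⟩ := h.extend hrun hq hk
      exact ⟨_, hu, p', (M'.mem_Rb_post b).2 ⟨q', hq', k, hp'⟩, hu'⟩
    obtain ⟨p, hp⟩ := hS.mono (M.subset_Rb b _)
    obtain ⟨-, -, p', hp', -⟩ := hfollow p hp
    have hS' : (M'.post S' a).Nonempty := by
      obtain ⟨q', hq', k, hk⟩ := (M'.mem_Rb_post b).1 hp'
      obtain ⟨r', hr', -⟩ := M'.runFrom_cons_eq_some.1 hk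
      exact ⟨r', (M'.mem_post).2 ⟨q', hq', hr'⟩⟩
    exact ⟨_, by rw [elStep_of_ne M' b hab, if_pos hS'], hfollow⟩

theorem Tracks.elRunFrom {S T : Finset M.Q} {S' : Finset M'.Q} (h : Tracks M M' S S')
    {w : List A} (hT : M.elRunFrom b S w = some T) :
    ∃ T', M'.elRunFrom b S' w = some T' ∧ Tracks M M' T T' := by
  induction w generalizing S S' with
  | nil => exact ⟨S', rfl, Option.some_injective _ hT ▸ h⟩
  | cons a w ih =>
    obtain ⟨S₁, h₁, hw⟩ := Option.bind_eq_some_iff.1 hT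
    obtain ⟨S₁', h₁', hS₁⟩ := h.elStep b hrun h₁
    obtain ⟨T', hT', hT⟩ := ih hS₁ hw
    exact ⟨T', Option.bind_eq_some_iff.2 ⟨S₁', h₁', hT'⟩, hT⟩

end Simulation

theorem Tracks.joinOut_le [SemilatticeSup F] {M M' : PMoore A F}
    (hdom : ∀ (w : List A) (x : F), M.output w = some x →
      ∃ y : F, M'.output w = some y ∧ x ≤ y)
    {T : Finset M.Q} {T' : Finset M'.Q} (h : Tracks M M' T T') (hT : T.Nonempty) :
    M.joinOut T ≤ M'.joinOut T' := by
  obtain ⟨q, hq⟩ := id hT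
  obtain ⟨-, -, q', hq', -⟩ := h q hq
  have hT' : T'.Nonempty := ⟨q', hq'⟩
  rw [joinOut, joinOut, dif_pos hT, dif_pos hT', Finset.sup'_le_iff]
  intro p hp
  obtain ⟨u, hu, p', hp', hu'⟩ := h p hp
  obtain ⟨y, hy, hle⟩ := hdom u (M.out p) (by simp [output, hu])
  simp only [output, hu', Option.map_some, Option.some.injEq] at hy
  exact hle.trans (hy ▸ Finset.le_sup' M'.out hp')

end PMoore

/-- Monotonicity of elastification: if `A` is pointwise dominated by `A'`, then the
elastification of `A` is pointwise dominated by the elastification of `A'`. -/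
theorem stmt16 {A F : Type} [DecidableEq A] [SemilatticeSup F]
    (M M' : PMoore A F) (b : A)
    (hdom : ∀ (w : List A) (x : F), M.output w = some x →
      ∃ y : F, M'.output w = some y ∧ x ≤ y) :
    ∀ (w : List A) (x : F), M.elOutput b w = some x →
      ∃ y : F, M'.elOutput b w = some y ∧ x ≤ y := by
  intro w x hx
  obtain ⟨T, hT, rfl⟩ := Option.map_eq_some_iff.1 hx
  have hrun : ∀ u q, M.runFrom M.init u = some q → ∃ q', M'.runFrom M'.init u = some q' := by
    intro u q hq
    obtain ⟨y, hy, -⟩ := hdom u (M.out q) (by simp [PMoore.output, hq])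
    obtain ⟨q', hq', -⟩ := Option.map_eq_some_iff.1 hy
    exact ⟨q', hq'⟩
  obtain ⟨T', hT', hTT'⟩ := (PMoore.tracks_Rb_init b hrun).elRunFrom b hrun hT
  have hTne : T.Nonempty :=
    M.nonempty_of_elRunFrom_eq_some b ⟨_, M.subset_Rb b _ (Finset.mem_singleton_self _)⟩ hT
  exact ⟨M'.joinOut T', by simp [PMoore.elOutput, PMoore.elRun, hT'], hTT'.joinOut_le hdom hTne⟩
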